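/- Let h ∈ ℝ^p, D ∈ ℝ^{p×d} with DD* = I, T = indices of the k largest entries of D*h. Suppose ‖D*_{T^C} h‖₁ ≤ 2c + ‖D*_T h‖₁ for some c ≥ 0. Then ‖D*_{T^C} h‖₂ ≤ 2c/√k + ‖D*_T h‖₂. -/

import Mathlib

/-!
Write `a = D*h`. Every tail entry of `a` is dominated in absolute value by each of the `k` head
entries, so `k |a j| ≤ ‖a_T‖₁` for `j ∉ T`, whence `k ‖a_{Tᶜ}‖₂² ≤ ‖a_T‖₁ ‖a_{Tᶜ}‖₁ ≤ (2c + ‖a_T‖₁)²`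
(this replaces the convex decomposition of `a_{Tᶜ}` into `k`-sparse pieces). Taking square roots
and applying Cauchy–Schwarz `‖a_T‖₁ ≤ √k ‖a_T‖₂` gives the bound.
-/

open scoped Classical BigOperators

noncomputable def l1 {n : ℕ} (v : Fin n → ℝ) : ℝ := ∑ i, |v i|

noncomputable def l2 {n : ℕ} (v : Fin n → ℝ) : ℝ := Real.sqrt (∑ i, (v i) ^ 2)

def Sparse {n : ℕ} (k : ℕ) (v : Fin n → ℝ) : Prop :=
  (Finset.univ.filter (fun i => v i ≠ 0)).card ≤ k

def restrict {n : ℕ} (S : Finset (Fin n)) (v : Fin n → ℝ) : Fin n → ℝ :=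
  fun i => if i ∈ S then v i else 0

def DRIP {n p d : ℕ} (Φ : Matrix (Fin n) (Fin p) ℝ) (D : Matrix (Fin p) (Fin d) ℝ)
    (m : ℕ) (δ : ℝ) : Prop :=
  ∀ v : Fin d → ℝ, Sparse m v →
    (1 - δ) * (l2 (D.mulVec v)) ^ 2 ≤ (l2 (Φ.mulVec (D.mulVec v))) ^ 2 ∧
    (l2 (Φ.mulVec (D.mulVec v))) ^ 2 ≤ (1 + δ) * (l2 (D.mulVec v)) ^ 2

def IsLargestK {n : ℕ} (k : ℕ) (a : Fin n → ℝ) (T : Finset (Fin n)) : Prop :=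
  T.card = k ∧ ∀ i ∈ T, ∀ j ∉ T, |a j| ≤ |a i|

section Restrict

variable {n : ℕ} (S : Finset (Fin n)) (v : Fin n → ℝ)

theorem sum_restrict (f : ℝ → ℝ) (hf : f 0 = 0) :
    ∑ i, f (restrict S v i) = ∑ i ∈ S, f (v i) := by
  rw [← Finset.sum_subset (Finset.subset_univ S) fun _ _ hi => by simp [restrict, hi, hf]]
  exact Finset.sum_congr rfl fun i hi => by simp [restrict, hi]

theorem l1_restrict : l1 (restrict S v) = ∑ i ∈ S, |v i| :=
  sum_restrict S v (fun x => |x|) abs_zero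

theorem l2_restrict_sq : l2 (restrict S v) ^ 2 = ∑ i ∈ S, v i ^ 2 := by
  rw [l2, Real.sq_sqrt (Finset.sum_nonneg fun _ _ => sq_nonneg _)]
  exact sum_restrict S v (· ^ 2) (zero_pow two_ne_zero)

theorem l1_nonneg (w : Fin n → ℝ) : 0 ≤ l1 w :=
  Finset.sum_nonneg fun _ _ => abs_nonneg _

theorem l1_restrict_le_sqrt_card_mul_l2 :
    l1 (restrict S v) ≤ Real.sqrt S.card * l2 (restrict S v) := by
  have h := Real.sum_mul_le_sqrt_mul_sqrt S (fun _ => 1) (fun i => |v i|)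
  simp only [one_mul, one_pow, Finset.sum_const, nsmul_eq_mul, mul_one, sq_abs] at h
  rwa [l1_restrict, l2, sum_restrict S v (· ^ 2) (zero_pow two_ne_zero)]

end Restrict

theorem sum_sq_le_mul_sum_abs {ι : Type*} (s : Finset ι) (f : ι → ℝ) {M : ℝ}
    (hM : ∀ i ∈ s, |f i| ≤ M) : ∑ i ∈ s, f i ^ 2 ≤ M * ∑ i ∈ s, |f i| := by
  rw [Finset.mul_sum]
  refine Finset.sum_le_sum fun i hi => ?_
  rw [← sq_abs, sq]
  exact mul_le_mul_of_nonneg_right (hM i hi) (abs_nonneg _)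

namespace IsLargestK

variable {n k : ℕ} {a : Fin n → ℝ} {T : Finset (Fin n)}

theorem card_mul_abs_le_l1 (hT : IsLargestK k a T) {j : Fin n} (hj : j ∉ T) :
    k * |a j| ≤ l1 (restrict T a) := by
  calc (k : ℝ) * |a j| = ∑ _i ∈ T, |a j| := by rw [Finset.sum_const, nsmul_eq_mul, hT.1]
    _ ≤ l1 (restrict T a) := l1_restrict T a ▸ Finset.sum_le_sum fun i hi => hT.2 i hi j hj

theorem card_mul_l2_compl_sq_le (hT : IsLargestK k a T) :
    k * l2 (restrict Tᶜ a) ^ 2 ≤ l1 (restrict T a) * l1 (restrict Tᶜ a) := by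
  rcases k.eq_zero_or_pos with rfl | hk
  · simpa using mul_nonneg (l1_nonneg _) (l1_nonneg _)
  have hkR : (0 : ℝ) < k := Nat.cast_pos.mpr hk
  have hentry : ∀ j ∈ Tᶜ, |a j| ≤ l1 (restrict T a) / k := fun j hj =>
    (le_div_iff₀' hkR).mpr (hT.card_mul_abs_le_l1 (Finset.mem_compl.mp hj))
  calc (k : ℝ) * l2 (restrict Tᶜ a) ^ 2
      ≤ k * (l1 (restrict T a) / k * l1 (restrict Tᶜ a)) := by
        rw [l2_restrict_sq, l1_restrict Tᶜ]
        exact mul_le_mul_of_nonneg_left (sum_sq_le_mul_sum_abs _ _ hentry) hkR.le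
    _ = l1 (restrict T a) * l1 (restrict Tᶜ a) := by field_simp

theorem sqrt_card_mul_l2_compl_le (hT : IsLargestK k a T) {M : ℝ}
    (hhead : l1 (restrict T a) ≤ M) (htail : l1 (restrict Tᶜ a) ≤ M) :
    Real.sqrt k * l2 (restrict Tᶜ a) ≤ M := by
  have hM : 0 ≤ M := (l1_nonneg _).trans hhead
  rw [← pow_le_pow_iff_left₀ (by unfold l2; positivity) hM two_ne_zero, mul_pow,
    Real.sq_sqrt (Nat.cast_nonneg k), sq M]
  exact hT.card_mul_l2_compl_sq_le.trans
    (mul_le_mul hhead htail (l1_nonneg _) hM)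

end IsLargestK

theorem tail_l2_bound_general {p d k : ℕ} (hk : 0 < k) (D : Matrix (Fin p) (Fin d) ℝ)
    (h : Fin p → ℝ)
    (T : Finset (Fin d)) (hT : IsLargestK k (D.transpose.mulVec h) T)
    (c : ℝ) (hc : 0 ≤ c)
    (hyp : l1 (restrict Tᶜ (D.transpose.mulVec h)) ≤
      2 * c + l1 (restrict T (D.transpose.mulVec h))) :
    l2 (restrict Tᶜ (D.transpose.mulVec h)) ≤
      2 * c / Real.sqrt k + l2 (restrict T (D.transpose.mulVec h)) := by
  set a := D.transpose.mulVec h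
  have hsk : 0 < Real.sqrt k := Real.sqrt_pos.mpr (Nat.cast_pos.mpr hk)
  have htail : Real.sqrt k * l2 (restrict Tᶜ a) ≤ 2 * c + l1 (restrict T a) :=
    hT.sqrt_card_mul_l2_compl_le (by linarith) hyp
  have hhead : l1 (restrict T a) ≤ Real.sqrt k * l2 (restrict T a) := by
    simpa only [hT.1] using l1_restrict_le_sqrt_card_mul_l2 T a
  rw [div_add' _ _ _ hsk.ne', le_div_iff₀' hsk]
  linarith

theorem tail_l2_bound {p d k : ℕ} (hk : 0 < k) (D : Matrix (Fin p) (Fin d) ℝ)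
    (hD : D * D.transpose = 1) (h : Fin p → ℝ)
    (T : Finset (Fin d)) (hT : IsLargestK k (D.transpose.mulVec h) T)
    (c : ℝ) (hc : 0 ≤ c)
    (hyp : l1 (restrict Tᶜ (D.transpose.mulVec h)) ≤
      2 * c + l1 (restrict T (D.transpose.mulVec h))) :
    l2 (restrict Tᶜ (D.transpose.mulVec h)) ≤
      2 * c / Real.sqrt k + l2 (restrict T (D.transpose.mulVec h)) :=
  tail_l2_bound_general hk D h T hT c hc hyp
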